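/- arXiv:2108.07863 — 2 statements merged into one kernel-verified Lean document; each statement's English description precedes it below -/
import Mathlib

section
/- Let k be a field of characteristic p, where p is a prime, and let Δ : k[X] → k[X] ⊗_k k[X] be the unique k-algebra homomorphism with Δ(X) = X ⊗ 1 + 1 ⊗ X. Then the set of primitive elements {f ∈ k[X] : Δ(f) = f ⊗ 1 + 1 ⊗ f} is exactly the k-linear span of the set {X^{p^m} : m ∈ ℕ}. -/
open TensorProduct Polynomial

lemma aux_pow_of_dvd_choose {p : ℕ} (hp : p.Prime) :
    ∀ n : ℕ, n ≠ 0 → (∀ i, 0 < i → i < n → p ∣ n.choose i) → ∃ m, n = p ^ m := by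
  haveI : Fact p.Prime := ⟨hp⟩
  have hp2 := hp.two_le
  intro n
  induction n using Nat.strong_induction_on with
  | _ n ih =>
    intro hn h
    rcases eq_or_ne n 1 with rfl | h1
    · exact ⟨0, by simp⟩
    have hn2 : 2 ≤ n := by omega
    by_cases hpn : p ∣ n
    · have hdiv : 0 < n / p := Nat.div_pos (Nat.le_of_dvd (by omega) hpn) (by omega)
      have hlt : n / p < n := Nat.div_lt_self (by omega) (by omega)
      have h' : ∀ j, 0 < j → j < n / p → p ∣ (n / p).choose j := by
        intro j hj hjn
        have lucas : n.choose (p * j) ≡ (n % p).choose ((p * j) % p) *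
            (n / p).choose ((p * j) / p) [MOD p] :=
          Choose.choose_modEq_choose_mod_mul_choose_div_nat
        rw [Nat.mod_eq_zero_of_dvd hpn, Nat.mul_mod_right,
          Nat.mul_div_cancel_left j (by omega : 0 < p), Nat.choose_self, one_mul] at lucas
        have hltn : p * j < n := by
          have : p * j < p * (n / p) := mul_lt_mul_of_pos_left hjn (by omega)
          rwa [Nat.mul_div_cancel' hpn] at this
        have hd : p ∣ n.choose (p * j) := h (p * j) (by positivity) hltn
        exact (Nat.modEq_zero_iff_dvd).1 (lucas.symm.trans ((Nat.modEq_zero_iff_dvd).2 hd))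
      obtain ⟨m, hm⟩ := ih (n / p) hlt (by omega) h'
      refine ⟨m + 1, ?_⟩
      rw [pow_succ', ← hm]
      exact (Nat.mul_div_cancel' hpn).symm
    · exfalso
      have := h 1 (by omega) (by omega)
      rw [Nat.choose_one_right] at this
      exact hpn this

/-- Over a field of characteristic `p` (a prime), for the comultiplication
`Δ : k[X] → k[X] ⊗ k[X]`, the unique `k`-algebra homomorphism with
`Δ X = X ⊗ 1 + 1 ⊗ X`, the set of primitive elements of `k[X]` is exactly
the `k`-linear span of the monomials `X^(p^m)` for `m ∈ ℕ`. -/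
theorem stmt_4 {k : Type*} [Field k] (p : ℕ) (hp : p.Prime) [CharP k p]
    (Δ : Polynomial k →ₐ[k] Polynomial k ⊗[k] Polynomial k)
    (hΔ : Δ X = X ⊗ₜ[k] 1 + 1 ⊗ₜ[k] X) :
    {f : Polynomial k | Δ f = f ⊗ₜ[k] 1 + 1 ⊗ₜ[k] f} =
      ↑(Submodule.span k (Set.range fun m : ℕ => (X : Polynomial k) ^ p ^ m)) := by
  haveI : Fact p.Prime := ⟨hp⟩
  haveI : CharP (Polynomial k ⊗[k] Polynomial k) p :=
    charP_of_injective_algebraMap (algebraMap k _).injective p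
  -- coefficient extraction functionals
  let φ : ℕ → ℕ → (Polynomial k ⊗[k] Polynomial k →ₗ[k] k) := fun i j =>
    (TensorProduct.lid k k).toLinearMap ∘ₗ TensorProduct.map (lcoeff k i) (lcoeff k j)
  have hφ : ∀ (i j : ℕ) (a b : Polynomial k), φ i j (a ⊗ₜ[k] b) = a.coeff i * b.coeff j := by
    intro i j a b
    simp [φ, smul_eq_mul]
  have hΔpow : ∀ n : ℕ, Δ (X ^ n) = ∑ u ∈ Finset.range (n + 1),
      (n.choose u) • (((X : Polynomial k) ^ u) ⊗ₜ[k] ((X : Polynomial k) ^ (n - u))) := by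
    intro n
    rw [map_pow, hΔ, (Commute.all _ _).add_pow]
    refine Finset.sum_congr rfl fun u hu => ?_
    rw [Algebra.TensorProduct.tmul_pow, Algebra.TensorProduct.tmul_pow, one_pow, one_pow,
      Algebra.TensorProduct.tmul_mul_tmul, one_mul, mul_one, nsmul_eq_mul, mul_comm]
  have key : ∀ (i j : ℕ) (f : Polynomial k),
      φ i j (Δ f) = ((i + j).choose i : k) * f.coeff (i + j) := by
    intro i j
    suffices h : φ i j ∘ₗ Δ.toLinearMap = ((i + j).choose i : k) • lcoeff k (i + j) by
      intro f
      have := LinearMap.congr_fun h f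
      simpa using this
    apply Polynomial.lhom_ext'
    intro n
    apply LinearMap.ext
    intro a
    simp only [LinearMap.comp_apply, AlgHom.toLinearMap_apply, LinearMap.smul_apply,
      lcoeff_apply, smul_eq_mul]
    rw [← smul_X_eq_monomial, map_smul, map_smul, hΔpow, map_sum, coeff_smul]
    simp only [map_nsmul, hφ, coeff_X_pow, smul_eq_mul, coeff_monomial]
    by_cases hn : n = i + j
    · subst hn
      rw [Finset.sum_eq_single i]
      · simp [Nat.add_sub_cancel_left, mul_comm]
      · intro u hu hui
        simp [Ne.symm hui]
      · intro hi
        exfalso; exact hi (Finset.mem_range.mpr (by omega))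
    · rw [if_neg (fun hh => hn hh.symm), Finset.sum_eq_zero, mul_zero, mul_zero]
      intro u hu
      rw [Finset.mem_range] at hu
      by_cases hui : i = u
      · rw [if_pos hui, if_neg (by omega), mul_zero, smul_zero]
      · rw [if_neg hui, zero_mul, smul_zero]
  ext f
  simp only [Set.mem_setOf_eq, SetLike.mem_coe]
  constructor
  · intro hf
    have hcoeff : ∀ i j : ℕ, ((i + j).choose i : k) * f.coeff (i + j) =
        f.coeff i * (1 : Polynomial k).coeff j + (1 : Polynomial k).coeff i * f.coeff j := by
      intro i j
      have := congrArg (φ i j) hf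
      rwa [key, map_add, hφ, hφ] at this
    have h0 : f.coeff 0 = 0 := by
      have := hcoeff 0 0
      have h00 := hcoeff 0 0
      simp only [Nat.choose_self, Nat.cast_one, one_mul, coeff_one_zero, mul_one,
        Nat.add_zero] at h00
      linear_combination -h00
    have hsupp : ∀ n ∈ f.support, ∃ m, n = p ^ m := by
      intro n hn
      have hfn : f.coeff n ≠ 0 := Polynomial.mem_support_iff.mp hn
      have hn0 : n ≠ 0 := fun h => hfn (h ▸ h0)
      refine aux_pow_of_dvd_choose hp n hn0 fun i hi hin => ?_
      have := hcoeff i (n - i)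
      rw [Nat.add_sub_cancel' (by omega)] at this
      rw [coeff_one, coeff_one, if_neg (by omega), if_neg (by omega), mul_zero, zero_mul,
        add_zero] at this
      have hc : ((n.choose i : k)) = 0 := by
        rcases mul_eq_zero.mp this with h | h
        · exact h
        · exact absurd h hfn
      exact (CharP.cast_eq_zero_iff k p _).mp hc
    rw [Polynomial.as_sum_support f]
    refine Submodule.sum_mem _ fun n hn => ?_
    obtain ⟨m, rfl⟩ := hsupp n hn
    rw [← smul_X_eq_monomial]
    exact Submodule.smul_mem _ _ (Submodule.subset_span ⟨m, rfl⟩)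
  · intro hf
    induction hf using Submodule.span_induction with
    | mem x hx =>
      obtain ⟨m, rfl⟩ := hx
      dsimp only
      rw [map_pow, hΔ, add_pow_char_pow, Algebra.TensorProduct.tmul_pow,
        Algebra.TensorProduct.tmul_pow, one_pow]
    | zero => simp
    | add x y hx hy ihx ihy =>
      rw [map_add, ihx, ihy, add_tmul, tmul_add]
      ring
    | smul c x hx ihx =>
      rw [map_smul, ihx, smul_add, smul_tmul', tmul_smul]
end

section
/- Let k be a field and M a k-module. Let ε : Λ(M) → k be the canonical augmentation of the exterior algebra of M over k (the k-algebra homomorphism restricting to the identity on k and vanishing on M), and let I = ker ε be the augmentation ideal. Then the module of indecomposables I/I² is k-linearly isomorphic to M; in particular the indecomposables of the exterior algebra are exactly (the classes of) the generators. -/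
/-!
Map `Λ(M)` to the trivial square-zero extension `R ⊕ M` by `m ↦ (0, m)`. Its second component
`ιInv` obeys the Leibniz rule `ιInv (x * y) = ε x • ιInv y + ε y • ιInv x`, so it kills `I²`;
its first component is `ε`. Conversely, induction over `Λ(M)` shows `I ⊆ ι(M) + I²`, so the
kernel of `ιInv` on `I` is exactly `I²`, and `ιInv` identifies `I/I²` with `M`.
-/

namespace ExteriorAlgebra

variable {R M : Type*} [CommRing R] [AddCommGroup M] [Module R M]

@[simp]
theorem algebraMapInv_ι (m : M) : algebraMapInv (ι R m) = 0 := by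
  simp [algebraMapInv]

theorem ιInv_mul (x y : ExteriorAlgebra R M) :
    ιInv (x * y) = algebraMapInv x • ιInv y + algebraMapInv y • ιInv x := by
  let : Module Rᵐᵒᵖ M := Module.compHom _ ((RingHom.id R).fromOpposite mul_comm)
  have : IsCentralScalar R M := ⟨fun r m => rfl⟩
  have fst_comp : (TrivSqZeroExt.fstHom R R M).comp toTrivSqZeroExt = algebraMapInv := by
    ext m
    simp [algebraMapInv]
  simp only [ιInv, LinearMap.comp_apply, AlgHom.toLinearMap_apply, TrivSqZeroExt.sndHom_apply,
    map_mul, TrivSqZeroExt.snd_mul, ← fst_comp]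
  -- the right action `op r • m` was chosen to be `r • m`
  rfl

variable (R M) in
def augmentationIdeal : Submodule R (ExteriorAlgebra R M) :=
  LinearMap.ker algebraMapInv.toLinearMap

theorem mem_augmentationIdeal {x : ExteriorAlgebra R M} :
    x ∈ augmentationIdeal R M ↔ algebraMapInv x = 0 :=
  Iff.rfl

theorem ι_mem_augmentationIdeal (m : M) : ι R m ∈ augmentationIdeal R M :=
  mem_augmentationIdeal.2 (algebraMapInv_ι m)

theorem ιInv_eq_zero_of_mem_mul {x : ExteriorAlgebra R M}
    (hx : x ∈ augmentationIdeal R M * augmentationIdeal R M) : ιInv x = 0 := by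
  refine Submodule.mul_induction_on hx (fun a ha b hb => ?_) fun a b ha hb => ?_
  · rw [ιInv_mul, mem_augmentationIdeal.1 ha, mem_augmentationIdeal.1 hb, zero_smul, zero_smul,
      add_zero]
  · rw [map_add, ha, hb, add_zero]

theorem sub_algebraMap_algebraMapInv_mem_augmentationIdeal (x : ExteriorAlgebra R M) :
    x - algebraMap R _ (algebraMapInv x) ∈ augmentationIdeal R M := by
  rw [mem_augmentationIdeal, map_sub, algebraMap_leftInverse, sub_self]

theorem sub_algebraMap_algebraMapInv_mem_range_ι_sup (x : ExteriorAlgebra R M) :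
    x - algebraMap R _ (algebraMapInv x) ∈
      LinearMap.range (ι R) ⊔ augmentationIdeal R M * augmentationIdeal R M := by
  induction x using ExteriorAlgebra.induction with
  | algebraMap r => rw [algebraMap_leftInverse, sub_self]; exact zero_mem _
  | ι m => rw [algebraMapInv_ι, map_zero, sub_zero]; exact Submodule.mem_sup_left ⟨m, rfl⟩
  | mul a b ha hb =>
    have hab : a * b - algebraMap R _ (algebraMapInv (a * b)) =
        (a - algebraMap R _ (algebraMapInv a)) * (b - algebraMap R _ (algebraMapInv b)) +
          algebraMapInv a • (b - algebraMap R _ (algebraMapInv b)) +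
          algebraMapInv b • (a - algebraMap R _ (algebraMapInv a)) := by
      simp only [map_mul, Algebra.smul_def, mul_sub, sub_mul, Algebra.commutes _ a,
        Algebra.commutes (algebraMapInv b) (algebraMap R _ (algebraMapInv a))]
      abel
    rw [hab]
    refine add_mem (add_mem (Submodule.mem_sup_right (Submodule.mul_mem_mul ?_ ?_))
      (Submodule.smul_mem _ _ hb)) (Submodule.smul_mem _ _ ha)
    all_goals exact sub_algebraMap_algebraMapInv_mem_augmentationIdeal _
  | add a b ha hb =>
    rw [map_add, map_add, add_sub_add_comm]
    exact add_mem ha hb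

theorem augmentationIdeal_le_range_ι_sup :
    augmentationIdeal R M ≤
      LinearMap.range (ι R) ⊔ augmentationIdeal R M * augmentationIdeal R M := fun x hx => by
  simpa [mem_augmentationIdeal.1 hx] using sub_algebraMap_algebraMapInv_mem_range_ι_sup x

theorem ker_ιInv_comp_subtype :
    LinearMap.ker (ιInv ∘ₗ (augmentationIdeal R M).subtype) =
      (augmentationIdeal R M * augmentationIdeal R M).comap (augmentationIdeal R M).subtype := by
  ext ⟨x, hx⟩
  simp only [LinearMap.mem_ker, LinearMap.comp_apply, Submodule.subtype_apply,
    Submodule.mem_comap]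
  refine ⟨fun hιInv => ?_, ιInv_eq_zero_of_mem_mul⟩
  obtain ⟨_, ⟨m, rfl⟩, y, hy, rfl⟩ := Submodule.mem_sup.1 (augmentationIdeal_le_range_ι_sup hx)
  rw [map_add, ι_leftInverse, ιInv_eq_zero_of_mem_mul hy, add_zero] at hιInv
  rwa [hιInv, map_zero, zero_add]

theorem ιInv_comp_subtype_surjective :
    Function.Surjective (ιInv ∘ₗ (augmentationIdeal R M).subtype) := fun m =>
  ⟨⟨ι R m, ι_mem_augmentationIdeal m⟩, ι_leftInverse m⟩

variable (R M) in
noncomputable def indecomposablesEquiv :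
    (augmentationIdeal R M ⧸
        (augmentationIdeal R M * augmentationIdeal R M).comap (augmentationIdeal R M).subtype) ≃ₗ[R]
      M :=
  (Submodule.quotEquivOfEq _ _ ker_ιInv_comp_subtype.symm).trans
    (LinearMap.quotKerEquivOfSurjective _ ιInv_comp_subtype_surjective)

end ExteriorAlgebra

/-- For a field `k` and a `k`-module `M`, let `ε : Λ(M) → k` be the canonical
augmentation of the exterior algebra (killing `M`) and `I = ker ε` the
augmentation ideal. Then the module of indecomposables `I/I²` is `k`-linearly
isomorphic to `M`. -/
theorem stmt_10 {k M : Type*} [Field k] [AddCommGroup M] [Module k M]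
    (I : Submodule k (ExteriorAlgebra k M))
    (hI : I = LinearMap.ker (ExteriorAlgebra.algebraMapInv (R := k) (M := M)).toLinearMap) :
    Nonempty ((↥I ⧸ Submodule.comap I.subtype (I * I)) ≃ₗ[k] M) := by
  subst hI
  exact ⟨ExteriorAlgebra.indecomposablesEquiv k M⟩
end
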